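/- arXiv:1205.6016 — 3 statements merged into one kernel-verified Lean document; each statement's English description precedes it below -/
import Mathlib

section
/- For 0 < ℓ < n, the coefficient matrix of the Dicke state |ℓ,n⟩ across the bipartition of the first k qubits versus the remaining n−k qubits has rank equal to min(k, n−k, ℓ, n−ℓ) + 1. -/
/-- Hamming weight of an `n`-bit string. -/
def hammingWeight {n : ℕ} (x : Fin n → Bool) : ℕ :=
  (Finset.univ.filter fun i => x i = true).card

/-- The symmetric Dicke state `|ℓ,n⟩`: the normalized equal superposition of all
computational basis strings of Hamming weight `ℓ`. -/
noncomputable def dicke (n ℓ : ℕ) : (Fin n → Bool) → ℂ := fun x =>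
  if hammingWeight x = ℓ then ((Real.sqrt (n.choose ℓ) : ℂ))⁻¹ else 0

/-- The coefficient matrix of an `n`-qubit state across the bipartition `S | Sᶜ`. -/
def coeffMatrix {n : ℕ} (ψ : (Fin n → Bool) → ℂ) (S : Finset (Fin n)) :
    Matrix ({i // i ∈ S} → Bool) ({i // i ∉ S} → Bool) ℂ :=
  Matrix.of fun f g => ψ fun i => if h : i ∈ S then f ⟨i, h⟩ else g ⟨i, h⟩

/-!
Across any bipartition, the amplitude of `|f⟩ ⊗ |g⟩` in `|ℓ,n⟩` only depends on whether the
weights of `f` and `g` add up to `ℓ`. A matrix `[u i + v j = ℓ]` factors through the set of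
weights `w` attained by `u` for which `ℓ - w` is attained by `v`, and it contains an identity
submatrix indexed by that same set, so its rank is the number of such `w`. For bit strings on
parts of sizes `s` and `n - s` these are the integers in `[ℓ - (n - s), min s ℓ]`.
-/

open Finset Matrix

section SumIndicator

variable (K : Type*) [Field K] {ι κ : Type*} [Fintype ι] [Fintype κ]

def sumIndicator (u : ι → ℕ) (v : κ → ℕ) (ℓ : ℕ) : Matrix ι κ K :=
  of fun i j => if u i + v j = ℓ then 1 else 0

def feasibleWeights (u : ι → ℕ) (v : κ → ℕ) (ℓ : ℕ) : Finset ℕ :=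
  {w ∈ univ.image u | ∃ j, w + v j = ℓ}

variable {K}

theorem sumIndicator_eq_mul (u : ι → ℕ) (v : κ → ℕ) (ℓ : ℕ) :
    sumIndicator K u v ℓ =
      (of fun i (w : feasibleWeights u v ℓ) => if u i = w then (1 : K) else 0) *
        of fun (w : feasibleWeights u v ℓ) j => if (w : ℕ) + v j = ℓ then (1 : K) else 0 := by
  ext i j
  simp only [sumIndicator, of_apply, mul_apply, ite_mul, one_mul, zero_mul]
  by_cases h : u i + v j = ℓ
  · have hi : u i ∈ feasibleWeights u v ℓ := by
      simp only [feasibleWeights, mem_filter, mem_image, mem_univ, true_and]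
      exact ⟨⟨i, rfl⟩, j, h⟩
    rw [Fintype.sum_eq_single ⟨u i, hi⟩ (fun w hw => if_neg fun hiw => hw (Subtype.ext hiw.symm))]
    simp [h]
  · rw [if_neg h, eq_comm]
    exact Finset.sum_eq_zero fun w _ => by split_ifs with hiw <;> simp_all

theorem rank_sumIndicator_le (u : ι → ℕ) (v : κ → ℕ) (ℓ : ℕ) :
    (sumIndicator K u v ℓ).rank ≤ #(feasibleWeights u v ℓ) := by
  rw [sumIndicator_eq_mul]
  exact (rank_mul_le_left _ _).trans ((rank_le_card_width _).trans (Fintype.card_coe _).le)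

theorem le_rank_sumIndicator (u : ι → ℕ) (v : κ → ℕ) (ℓ : ℕ) :
    #(feasibleWeights u v ℓ) ≤ (sumIndicator K u v ℓ).rank := by
  have hw (w : feasibleWeights u v ℓ) : (∃ i, u i = w) ∧ ∃ j, (w : ℕ) + v j = ℓ := by
    simpa [feasibleWeights] using w.2
  choose row hrow using fun w => (hw w).1
  choose col hcol using fun w => (hw w).2
  have hsub : (sumIndicator K u v ℓ).submatrix row col = 1 := by
    ext w w'
    simp only [submatrix_apply, sumIndicator, of_apply, one_apply, hrow, Subtype.ext_iff]
    have hw' := hcol w'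
    congr 1
    exact propext (by omega)
  calc #(feasibleWeights u v ℓ) = (1 : Matrix (feasibleWeights u v ℓ) _ K).rank := by simp
    _ ≤ _ := hsub ▸ rank_submatrix_le _ _ _

theorem rank_sumIndicator (u : ι → ℕ) (v : κ → ℕ) (ℓ : ℕ) :
    (sumIndicator K u v ℓ).rank = #(feasibleWeights u v ℓ) :=
  (rank_sumIndicator_le u v ℓ).antisymm (le_rank_sumIndicator u v ℓ)

end SumIndicator

section TrueCount

variable {α β : Type*} [Fintype α] [Fintype β]

def trueCount (f : α → Bool) : ℕ := #{i | f i = true}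

variable [DecidableEq α] [DecidableEq β]

theorem exists_trueCount_eq_iff {w : ℕ} :
    (∃ f : α → Bool, trueCount f = w) ↔ w ≤ Fintype.card α := by
  constructor
  · rintro ⟨f, rfl⟩
    exact card_le_univ _
  · intro h
    obtain ⟨T, -, hT⟩ := exists_subset_card_eq (s := (univ : Finset α)) (by simpa using h)
    exact ⟨fun i => decide (i ∈ T), by simpa [trueCount] using hT⟩

theorem feasibleWeights_trueCount (ℓ : ℕ) :
    feasibleWeights (trueCount (α := α)) (trueCount (α := β)) ℓ =
      Icc (ℓ - Fintype.card β) (min (Fintype.card α) ℓ) := by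
  have hcompl (w : ℕ) :
      (∃ g : β → Bool, w + trueCount g = ℓ) ↔ w ≤ ℓ ∧ ℓ - w ≤ Fintype.card β := by
    constructor
    · rintro ⟨g, rfl⟩
      have := exists_trueCount_eq_iff.1 ⟨g, rfl⟩
      omega
    · rintro ⟨hw, hb⟩
      obtain ⟨g, hg⟩ := exists_trueCount_eq_iff.2 hb
      exact ⟨g, by omega⟩
  ext w
  simp only [feasibleWeights, mem_filter, mem_image, mem_univ, true_and, mem_Icc, hcompl,
    exists_trueCount_eq_iff]
  omega

theorem rank_sumIndicator_trueCount (K : Type*) [Field K] {ℓ : ℕ}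
    (hℓ : ℓ ≤ Fintype.card α + Fintype.card β) :
    (sumIndicator K (trueCount (α := α)) (trueCount (α := β)) ℓ).rank =
      min (min (Fintype.card α) (Fintype.card β))
        (min ℓ (Fintype.card α + Fintype.card β - ℓ)) + 1 := by
  rw [rank_sumIndicator, feasibleWeights_trueCount, Nat.card_Icc]
  omega

end TrueCount

theorem hammingWeight_dite {n : ℕ} (S : Finset (Fin n)) (f : S → Bool)
    (g : {i // i ∉ S} → Bool) :
    hammingWeight (fun i => if h : i ∈ S then f ⟨i, h⟩ else g ⟨i, h⟩) =
      trueCount f + trueCount g := by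
  simp only [hammingWeight, trueCount, card_filter]
  rw [← Fintype.sum_subtype_add_sum_subtype (· ∈ S)]
  congr 1
  · exact Finset.sum_congr (by congr!) fun i _ => by rw [dif_pos i.2]
  · exact Finset.sum_congr rfl fun i _ => by rw [dif_neg i.2]

theorem coeffMatrix_dicke (n ℓ : ℕ) (S : Finset (Fin n)) :
    coeffMatrix (dicke n ℓ) S =
      (√(n.choose ℓ) : ℂ)⁻¹ • sumIndicator ℂ trueCount trueCount ℓ := by
  ext f g
  simp [coeffMatrix, dicke, sumIndicator, hammingWeight_dite]

theorem rank_coeffMatrix_dicke {n ℓ : ℕ} (hℓ : ℓ ≤ n) (S : Finset (Fin n)) :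
    (coeffMatrix (dicke n ℓ) S).rank = min (min #S (n - #S)) (min ℓ (n - ℓ)) + 1 := by
  have hc : (√(n.choose ℓ) : ℂ)⁻¹ ≠ 0 := by
    simpa using (Nat.choose_pos hℓ).ne'
  have hS : Fintype.card S + Fintype.card {i // i ∉ S} = n := by
    simpa using Nat.add_sub_of_le (card_le_univ S)
  rw [coeffMatrix_dicke, rank_smul_of_mem_nonZeroDivisors _ (mem_nonZeroDivisors_of_ne_zero hc),
    rank_sumIndicator_trueCount ℂ (by omega), hS]
  simp

theorem dicke_rank_eq_general (n ℓ k : ℕ) (hn : ℓ < n) :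
    (coeffMatrix (dicke n ℓ) (Finset.univ.filter fun i : Fin n => (i : ℕ) < k)).rank
      = min (min k (n - k)) (min ℓ (n - ℓ)) + 1 := by
  rw [rank_coeffMatrix_dicke hn.le, Fin.card_filter_val_lt]
  omega

/-- For `0 < ℓ < n`, the coefficient matrix of the Dicke state `|ℓ,n⟩` across the
bipartition of the first `k` qubits versus the remaining `n - k` qubits has rank
`min(k, n-k, ℓ, n-ℓ) + 1`. -/
theorem dicke_rank_eq (n ℓ k : ℕ) (h0 : 0 < ℓ) (hn : ℓ < n) (hk0 : 0 < k) (hkn : k < n) :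
    (coeffMatrix (dicke n ℓ) (Finset.univ.filter fun i : Fin n => (i : ℕ) < k)).rank
      = min (min k (n - k)) (min ℓ (n - ℓ)) + 1 :=
  dicke_rank_eq_general n ℓ k hn
end

section
/- For the mixed state ρ = p|ℓ,n⟩⟨ℓ,n| + (1−p)|ℓ',n⟩⟨ℓ',n| with 0 < p < 1 and ℓ ≠ ℓ', ρ is not a product state ρ₁ ⊗ ρ₂ across any bipartition of the n qubits (i.e., ρ has genuine n-partite correlations). -/
/-- Combine assignments on `S` and on its complement into one basis string. -/
def combine {n : ℕ} (S : Finset (Fin n)) (f : {i // i ∈ S} → Bool)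
    (g : {i // i ∉ S} → Bool) : Fin n → Bool := fun i =>
  if h : i ∈ S then f ⟨i, h⟩ else g ⟨i, h⟩

/-!
The diagonal entry of `ρ` at a basis string is nonzero exactly when its Hamming weight is `ℓ`
or `ℓ'`. For a product `ρ₁ ⊗ ρ₂` the diagonal entry at `(f, g)` is `ρ₁ f f * ρ₂ g g`, so its
support is a rectangle: in terms of the local weights `(a, b)`, if `a + b` and `a' + b'` lie in
`{ℓ, ℓ'}` then so do `a + b'` and `a' + b`. When both parts are nonempty, local weights violating
this always exist.
-/

open Finset

lemma hammingWeight_le {n : ℕ} (x : Fin n → Bool) : hammingWeight x ≤ n :=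
  (card_filter_le _ _).trans_eq (card_fin n)

lemma dicke_ne_zero_iff {n ℓ : ℕ} {x : Fin n → Bool} :
    dicke n ℓ x ≠ 0 ↔ hammingWeight x = ℓ := by
  unfold dicke
  split_ifs with hx
  · have : (0 : ℝ) < n.choose ℓ := by
      exact_mod_cast Nat.choose_pos (hx ▸ hammingWeight_le x)
    simpa [hx] using this.ne'
  · simpa using hx

lemma vecMulVec_star_apply_self {ι : Type*} (v : ι → ℂ) (i : ι) :
    Matrix.vecMulVec v (star v) i i = (Complex.normSq (v i) : ℂ) :=
  Complex.mul_conj _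

lemma dicke_mixture_apply_self_ne_zero_iff {n ℓ ℓ' : ℕ} {p : ℝ} (hp0 : 0 < p) (hp1 : p < 1)
    (x : Fin n → Bool) :
    ((p : ℂ) • Matrix.vecMulVec (dicke n ℓ) (star (dicke n ℓ))
        + ((1 - p : ℝ) : ℂ) • Matrix.vecMulVec (dicke n ℓ') (star (dicke n ℓ'))) x x ≠ 0 ↔
      hammingWeight x = ℓ ∨ hammingWeight x = ℓ' := by
  simp only [Matrix.add_apply, Matrix.smul_apply, vecMulVec_star_apply_self, smul_eq_mul,
    ← Complex.ofReal_mul, ← Complex.ofReal_add, ne_eq, Complex.ofReal_eq_zero]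
  rw [← dicke_ne_zero_iff, ← dicke_ne_zero_iff, ← Complex.normSq_pos, ← Complex.normSq_pos]
  have h1 := Complex.normSq_nonneg (dicke n ℓ x)
  have h2 := Complex.normSq_nonneg (dicke n ℓ' x)
  constructor
  · intro h
    by_contra! hc
    exact h (by nlinarith)
  · rintro (h | h) <;> nlinarith

lemma exists_card_filter_eq {α : Type*} [Fintype α] {a : ℕ} (ha : a ≤ Fintype.card α) :
    ∃ f : α → Bool, #{i | f i = true} = a := by
  classical
  obtain ⟨t, -, rfl⟩ := exists_subset_card_eq (s := (univ : Finset α)) ha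
  exact ⟨fun i => decide (i ∈ t), by simp⟩

lemma hammingWeight_combine {n : ℕ} (S : Finset (Fin n)) (f : {i // i ∈ S} → Bool)
    (g : {i // i ∉ S} → Bool) :
    hammingWeight (combine S f g) = #{i | f i = true} + #{i | g i = true} := by
  simp only [hammingWeight, card_filter]
  rw [← Fintype.sum_subtype_add_sum_subtype (· ∈ S)
    (fun i => if combine S f g i = true then 1 else 0)]
  congr 1 <;> refine sum_congr (by ext; simp) fun i _ => ?_ <;> simp [combine, i.2]

/-- If `0 < ℓ < k + m`, the two splittings `ℓ = (ℓ - min m ℓ) + min m ℓ = min k ℓ + (ℓ - min k ℓ)`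
have cross sums `ℓ ± d` with `d ≠ 0`, which cannot both lie in `{ℓ, ℓ'}`; otherwise
`{ℓ, ℓ'} = {0, k + m}` and the splittings `0 + 0` and `k + m` work. -/
lemma exists_weights_cross_sum_not_mem_pair {k m ℓ ℓ' : ℕ} (hk : 0 < k) (hm : 0 < m)
    (hℓ : ℓ ≤ k + m) (hℓ' : ℓ' ≤ k + m) (hne : ℓ ≠ ℓ') :
    ∃ a a' b b', a ≤ k ∧ a' ≤ k ∧ b ≤ m ∧ b' ≤ m ∧
      (a + b = ℓ ∨ a + b = ℓ') ∧ (a' + b' = ℓ ∨ a' + b' = ℓ') ∧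
      ¬((a + b' = ℓ ∨ a + b' = ℓ') ∧ (a' + b = ℓ ∨ a' + b = ℓ')) := by
  by_cases h : 0 < ℓ ∧ ℓ < k + m
  · exact ⟨ℓ - min m ℓ, min k ℓ, min m ℓ, ℓ - min k ℓ, by omega⟩
  by_cases h' : 0 < ℓ' ∧ ℓ' < k + m
  · exact ⟨ℓ' - min m ℓ', min k ℓ', min m ℓ', ℓ' - min k ℓ', by omega⟩
  · exact ⟨0, k, 0, m, by omega⟩

def IsProductAcross {n : ℕ} (S : Finset (Fin n)) (ρ : Matrix (Fin n → Bool) (Fin n → Bool) ℂ) :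
    Prop :=
  ∃ (ρ₁ : Matrix ({i // i ∈ S} → Bool) ({i // i ∈ S} → Bool) ℂ)
    (ρ₂ : Matrix ({i // i ∉ S} → Bool) ({i // i ∉ S} → Bool) ℂ),
    ∀ f g f' g', ρ (combine S f g) (combine S f' g') = ρ₁ f f' * ρ₂ g g'

namespace IsProductAcross

variable {n : ℕ} {S : Finset (Fin n)} {ρ : Matrix (Fin n → Bool) (Fin n → Bool) ℂ}

lemma diag_mul_diag_comm (hρ : IsProductAcross S ρ) (f f' : {i // i ∈ S} → Bool)
    (g g' : {i // i ∉ S} → Bool) :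
    ρ (combine S f g) (combine S f g) * ρ (combine S f' g') (combine S f' g') =
      ρ (combine S f g') (combine S f g') * ρ (combine S f' g) (combine S f' g) := by
  obtain ⟨ρ₁, ρ₂, h⟩ := hρ
  simp only [h]
  ring

/-- The set of pairs of local weights on which the diagonal of a product state is supported
is a rectangle. -/
lemma weight_support_cross {P : ℕ → Prop} (hρ : IsProductAcross S ρ)
    (hP : ∀ x, ρ x x ≠ 0 ↔ P (hammingWeight x)) {a a' b b' : ℕ} (ha : a ≤ #S) (ha' : a' ≤ #S)
    (hb : b ≤ n - #S) (hb' : b' ≤ n - #S) (hab : P (a + b)) (hab' : P (a' + b')) :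
    P (a + b') ∧ P (a' + b) := by
  obtain ⟨f, rfl⟩ := exists_card_filter_eq (α := {i // i ∈ S}) (by simpa using ha)
  obtain ⟨f', rfl⟩ := exists_card_filter_eq (α := {i // i ∈ S}) (by simpa using ha')
  obtain ⟨g, rfl⟩ := exists_card_filter_eq (α := {i // i ∉ S})
    (by simpa [Fintype.card_subtype_compl] using hb)
  obtain ⟨g', rfl⟩ := exists_card_filter_eq (α := {i // i ∉ S})
    (by simpa [Fintype.card_subtype_compl] using hb')
  simp only [← hammingWeight_combine, ← hP] at hab hab' ⊢
  have hcross := hρ.diag_mul_diag_comm f f' g g'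
  exact mul_ne_zero_iff.mp (hcross ▸ mul_ne_zero hab hab')

end IsProductAcross

/-- The mixture `ρ = p|ℓ,n⟩⟨ℓ,n| + (1-p)|ℓ',n⟩⟨ℓ',n|` with `0 < p < 1` and `ℓ ≠ ℓ'`
is not a product state `ρ₁ ⊗ ρ₂` across any bipartition of the `n` qubits: it has
genuine `n`-partite correlations. -/
theorem dicke_mixture_genuine_correlation (n ℓ ℓ' : ℕ) (hℓ : ℓ ≤ n) (hℓ' : ℓ' ≤ n)
    (hne : ℓ ≠ ℓ') (p : ℝ) (hp0 : 0 < p) (hp1 : p < 1)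
    (ρ : Matrix (Fin n → Bool) (Fin n → Bool) ℂ)
    (hρ : ρ = (p : ℂ) • Matrix.vecMulVec (dicke n ℓ) (star (dicke n ℓ))
        + ((1 - p : ℝ) : ℂ) • Matrix.vecMulVec (dicke n ℓ') (star (dicke n ℓ'))) :
    ∀ S : Finset (Fin n), S.Nonempty → S ≠ Finset.univ →
      ¬ ∃ (ρ₁ : Matrix ({i // i ∈ S} → Bool) ({i // i ∈ S} → Bool) ℂ)
          (ρ₂ : Matrix ({i // i ∉ S} → Bool) ({i // i ∉ S} → Bool) ℂ),
        ∀ f g f' g', ρ (combine S f g) (combine S f' g') = ρ₁ f f' * ρ₂ g g' := by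
  intro S hS hSu hprod
  have hSn : #S < n := by simpa using card_lt_card (ssubset_univ_iff.mpr hSu)
  obtain ⟨a, a', b, b', ha, ha', hb, hb', hab, hab', hcross⟩ :=
    exists_weights_cross_sum_not_mem_pair hS.card_pos (Nat.sub_pos_of_lt hSn)
      (by omega : ℓ ≤ #S + (n - #S)) (by omega : ℓ' ≤ #S + (n - #S)) hne
  exact hcross <| IsProductAcross.weight_support_cross (P := fun w => w = ℓ ∨ w = ℓ') hprod
    (hρ ▸ dicke_mixture_apply_self_ne_zero_iff hp0 hp1) ha ha' hb hb' hab hab'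
end

section
/- The Smolin state ρ = (1/4) Σ_{x,y∈{0,1}} |β_{xy}⟩_{AB}⟨β_{xy}| ⊗ |β_{xy}⟩_{CD}⟨β_{xy}| is not a product state across any bipartition of the four qubits A, B, C, D (i.e., it has genuine 4-partite correlations). -/
/-- The Bell state `|β_{xy}⟩ = (|0,y⟩ + (−1)^x |1,ȳ⟩)/√2` as an amplitude function. -/
noncomputable def bell (x y a b : Bool) : ℂ :=
  ((Real.sqrt 2 : ℂ))⁻¹ * (if b = xor a y then (if a && x then -1 else 1) else 0)

/-- The pure state `|β_{xy}⟩_{AB} ⊗ |β_{xy}⟩_{CD}` on four qubits, the qubits being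
labeled by `Fin 4` (A = 0, B = 1, C = 2, D = 3). -/
noncomputable def bellPair (x y : Bool) : (Fin 4 → Bool) → ℂ := fun f =>
  bell x y (f 0) (f 1) * bell x y (f 2) (f 3)

/-! The diagonal of the Smolin state is `1/8` on basis strings of even parity and `0` on odd
ones. Given a cut `S | Sᶜ`, pick `i ∈ S` and `j ∉ S` and set only qubits `i` and `j`: for a product
state the resulting `2 × 2` table of diagonal entries, `(u, v) ↦ [u = v] / 8`, would be an outer
product `a u * b v`, which is impossible for a matrix of rank two. -/

open Matrix

theorem Matrix.vecMulVec_ne_diagonal_const {α R : Type*} [DecidableEq α] [Nontrivial α]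
    [CommMonoidWithZero R] [NoZeroDivisors R] {c : R} (hc : c ≠ 0) (a b : α → R) :
    vecMulVec a b ≠ diagonal fun _ => c := by
  intro h
  obtain ⟨u, v, huv⟩ := exists_pair_ne α
  have entry : ∀ u' v', a u' * b v' = if u' = v' then c else 0 := fun u' v' => by
    rw [← vecMulVec_apply, h, diagonal_apply]
  have : c * c = 0 := by
    calc c * c = a u * b u * (a v * b v) := by rw [entry, entry, if_pos rfl, if_pos rfl]
      _ = a u * b v * (a v * b u) := by ac_rfl
      _ = 0 := by rw [entry, if_neg huv, zero_mul]
  exact hc (mul_self_eq_zero.mp this)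

theorem combine_indicator {n : ℕ} {S : Finset (Fin n)} {i j : Fin n} (hi : i ∈ S) (hj : j ∉ S)
    (u v : Bool) :
    combine S (fun k => decide (k.1 = i) && u) (fun k => decide (k.1 = j) && v) =
      fun k => decide (k = i) && u || decide (k = j) && v := by
  funext k
  unfold combine
  split_ifs with hk
  · simp [ne_of_mem_of_not_mem hk hj]
  · simp [ne_of_mem_of_not_mem hi hk |>.symm]

theorem bell_mul_star_self (x y a b : Bool) :
    bell x y a b * star (bell x y a b) = if b = xor a y then 1 / 2 else 0 := by
  have hsqrt : ((Real.sqrt 2 : ℂ))⁻¹ * ((Real.sqrt 2 : ℂ))⁻¹ = 2⁻¹ := by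
    rw [← mul_inv, ← Complex.ofReal_mul, Real.mul_self_sqrt zero_le_two, Complex.ofReal_ofNat]
  unfold bell
  split_ifs <;> simp [hsqrt]

theorem bellPair_mul_star_self (x y : Bool) (s : Fin 4 → Bool) :
    bellPair x y s * star (bellPair x y s) =
      (if s 1 = xor (s 0) y then 1 / 2 else 0) * (if s 3 = xor (s 2) y then 1 / 2 else 0) := by
  rw [bellPair, star_mul', mul_mul_mul_comm, bell_mul_star_self, bell_mul_star_self]

noncomputable def smolinState : Matrix (Fin 4 → Bool) (Fin 4 → Bool) ℂ :=
  (1 / 4 : ℂ) • ∑ x : Bool, ∑ y : Bool, vecMulVec (bellPair x y) (star (bellPair x y))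

theorem smolinState_apply_self (s : Fin 4 → Bool) :
    smolinState s s = if xor (s 0) (xor (s 1) (xor (s 2) (s 3))) then 0 else 1 / 8 := by
  simp only [smolinState, Matrix.smul_apply, Fintype.sum_bool, Matrix.add_apply, vecMulVec_apply,
    Pi.star_apply, bellPair_mul_star_self, smul_eq_mul]
  generalize s 0 = a, s 1 = b, s 2 = c, s 3 = d
  cases a <;> cases b <;> cases c <;> cases d <;> norm_num

theorem xor_indicator_pair {i j : Fin 4} (hij : i ≠ j) (u v : Bool) :
    (let s : Fin 4 → Bool := fun k => decide (k = i) && u || decide (k = j) && v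
     xor (s 0) (xor (s 1) (xor (s 2) (s 3)))) = xor u v := by
  revert i j u v
  decide

/-- The Smolin state `ρ = (1/4) ∑_{x,y} |β_{xy}⟩⟨β_{xy}|_{AB} ⊗ |β_{xy}⟩⟨β_{xy}|_{CD}`
is not a product state across any bipartition of the four qubits: it has genuine
4-partite correlations. -/
theorem smolin_genuine_correlation (ρ : Matrix (Fin 4 → Bool) (Fin 4 → Bool) ℂ)
    (hρ : ρ = (1 / 4 : ℂ) • ∑ x : Bool, ∑ y : Bool,
        Matrix.vecMulVec (bellPair x y) (star (bellPair x y))) :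
    ∀ S : Finset (Fin 4), S.Nonempty → S ≠ Finset.univ →
      ¬ ∃ (ρ₁ : Matrix ({i // i ∈ S} → Bool) ({i // i ∈ S} → Bool) ℂ)
          (ρ₂ : Matrix ({i // i ∉ S} → Bool) ({i // i ∉ S} → Bool) ℂ),
        ∀ f g f' g', ρ (combine S f g) (combine S f' g') = ρ₁ f f' * ρ₂ g g' := by
  rintro S ⟨i, hi⟩ hS ⟨ρ₁, ρ₂, hprod⟩
  obtain ⟨j, hj⟩ : ∃ j, j ∉ S := by simpa [Finset.eq_univ_iff_forall] using hS
  let f : Bool → {k // k ∈ S} → Bool := fun u k => decide (k.1 = i) && u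
  let g : Bool → {k // k ∉ S} → Bool := fun v k => decide (k.1 = j) && v
  refine vecMulVec_ne_diagonal_const (one_div_ne_zero (by norm_num : (8 : ℂ) ≠ 0))
    (fun u => ρ₁ (f u) (f u)) (fun v => ρ₂ (g v) (g v)) ?_
  ext u v
  rw [vecMulVec_apply, ← hprod, combine_indicator hi hj, hρ, ← smolinState,
    smolinState_apply_self, xor_indicator_pair (ne_of_mem_of_not_mem hi hj), diagonal_apply]
  cases u <;> cases v <;> rfl
end
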